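/- Let d ≥ 1, α ∈ [0,1) and r > 0. Then there is a constant C ≥ 1 (depending only on d, α, r) such that for all k, l ∈ ℤ^d∖{0} with B_k^r ∩ B_l^r ≠ ∅, one has C^{−1}·(1 + |l|) ≤ 1 + |k| ≤ C·(1 + |l|). -/
import Mathlib


open MeasureTheory
open scoped ENNReal

/-- The integer lattice point `k ∈ ℤ^d` viewed as an element of `ℝ^d`. -/
noncomputable def intVec {d : ℕ} (k : Fin d → ℤ) : EuclideanSpace ℝ (Fin d) :=
  (EuclideanSpace.equiv (Fin d) ℝ).symm (fun i => (k i : ℝ))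

/-- The ball `B_k^r = {ξ ∈ ℝ^d : |ξ - |k|^{α₀} k| < r |k|^{α₀}}` with `α₀ = α/(1-α)`, a member of
the standard `α`-covering of the frequency space `ℝ^d`. -/
noncomputable def alphaBall (d : ℕ) (α r : ℝ) (k : Fin d → ℤ) :
    Set (EuclideanSpace ℝ (Fin d)) :=
  Metric.ball ((‖intVec k‖ ^ (α / (1 - α))) • intVec k) (r * ‖intVec k‖ ^ (α / (1 - α)))

lemma one_le_norm_intVec {d : ℕ} (k : Fin d → ℤ) (hk : k ≠ 0) : 1 ≤ ‖intVec k‖ := by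
  obtain ⟨i, hi⟩ : ∃ i, k i ≠ 0 := by
    by_contra h
    push_neg at h
    exact hk (funext fun i => h i)
  have h1 : (1 : ℝ) ≤ |(k i : ℝ)| := by
    have : (1 : ℤ) ≤ |k i| := Int.one_le_abs hi
    calc (1:ℝ) ≤ (|k i| : ℝ) := by exact_mod_cast this
      _ = |(k i : ℝ)| := by push_cast; ring
  have h2 : |(k i : ℝ)| ≤ ‖intVec k‖ := by
    have : ‖intVec k‖ = Real.sqrt (∑ j, ‖intVec k j‖ ^ 2) := EuclideanSpace.norm_eq _
    rw [this]
    have hle : ‖intVec k i‖ ^ 2 ≤ ∑ j, ‖intVec k j‖ ^ 2 :=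
      Finset.single_le_sum (f := fun j => ‖intVec k j‖ ^ 2) (fun j _ => by positivity) (Finset.mem_univ i)
    calc |(k i : ℝ)| = Real.sqrt (‖intVec k i‖ ^ 2) := by
          rw [Real.sqrt_sq_eq_abs, Real.norm_eq_abs, abs_abs]; rfl
      _ ≤ Real.sqrt (∑ j, ‖intVec k j‖ ^ 2) := Real.sqrt_le_sqrt hle
  linarith

/-- For `d ≥ 1`, `α ∈ [0,1)` and `r > 0`, there is a constant `C ≥ 1`
(depending only on `d, α, r`) such that whenever `B_k^r` and `B_l^r` intersect
(`k, l ∈ ℤ^d∖{0}`), the weights `1 + |k|` and `1 + |l|` are comparable: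
`C⁻¹ (1 + |l|) ≤ 1 + |k| ≤ C (1 + |l|)`. -/
theorem alpha_covering_weight_comparable
    {d : ℕ} (hd : 1 ≤ d) (α : ℝ) (hα0 : 0 ≤ α) (hα1 : α < 1) (r : ℝ) (hr : 0 < r) :
    ∃ C : ℝ, 1 ≤ C ∧ ∀ k l : Fin d → ℤ, k ≠ 0 → l ≠ 0 →
      (alphaBall d α r k ∩ alphaBall d α r l).Nonempty →
      C⁻¹ * (1 + ‖intVec l‖) ≤ 1 + ‖intVec k‖ ∧
      1 + ‖intVec k‖ ≤ C * (1 + ‖intVec l‖) := by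
  set a : ℝ := α / (1 - α) with ha_def
  have h1a : (0:ℝ) < 1 - α := by linarith
  have ha : 0 ≤ a := div_nonneg hα0 h1a.le
  have key : ∀ k l : Fin d → ℤ, k ≠ 0 → l ≠ 0 →
      (alphaBall d α r k ∩ alphaBall d α r l).Nonempty →
      ‖intVec k‖ ≤ ‖intVec l‖ + 2 * r := by
    intro k l hk hl ⟨ξ, hξk, hξl⟩
    set t := ‖intVec k‖ with ht_def
    set s := ‖intVec l‖ with hs_def
    have ht : 1 ≤ t := one_le_norm_intVec k hk
    have hs : 1 ≤ s := one_le_norm_intVec l hl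
    have ht0 : 0 < t := by linarith
    have hs0 : 0 < s := by linarith
    have hta : 0 < t ^ a := Real.rpow_pos_of_pos ht0 a
    have hsa : 0 < s ^ a := Real.rpow_pos_of_pos hs0 a
    -- distance between centers
    have hd1 : dist ((t ^ a) • intVec k) ((s ^ a) • intVec l) < r * t ^ a + r * s ^ a := by
      calc dist ((t ^ a) • intVec k) ((s ^ a) • intVec l)
          ≤ dist ((t ^ a) • intVec k) ξ + dist ξ ((s ^ a) • intVec l) := dist_triangle _ _ _
        _ < r * t ^ a + r * s ^ a := by
            rw [dist_comm ((t ^ a) • intVec k) ξ]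
            exact add_lt_add hξk hξl
    have hnk : ‖(t ^ a) • intVec k‖ = t ^ (a + 1) := by
      rw [norm_smul, Real.norm_of_nonneg hta.le, Real.rpow_add_one ht0.ne' a]
    have hnl : ‖(s ^ a) • intVec l‖ = s ^ (a + 1) := by
      rw [norm_smul, Real.norm_of_nonneg hsa.le, Real.rpow_add_one hs0.ne' a]
    have hd2 : t ^ (a + 1) - s ^ (a + 1) < r * t ^ a + r * s ^ a := by
      have := abs_norm_sub_norm_le ((t ^ a) • intVec k) ((s ^ a) • intVec l)
      rw [hnk, hnl, ← dist_eq_norm] at this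
      have h' := (abs_le.mp (le_of_lt (lt_of_le_of_lt this hd1))).2
      -- this is ≤, but we can use ≤ with strictness from hd1
      calc t ^ (a + 1) - s ^ (a + 1) ≤ |t ^ (a + 1) - s ^ (a + 1)| := le_abs_self _
        _ ≤ dist ((t ^ a) • intVec k) ((s ^ a) • intVec l) := this
        _ < r * t ^ a + r * s ^ a := hd1
    rcases le_total t s with h | h
    · linarith
    · -- s ≤ t
      have hsa_le : s ^ a ≤ t ^ a := Real.rpow_le_rpow hs0.le h ha
      have e1 : t ^ (a + 1) = t ^ a * t := Real.rpow_add_one ht0.ne' a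
      have e2 : s ^ (a + 1) = s ^ a * s := Real.rpow_add_one hs0.ne' a
      rw [e1, e2] at hd2
      have h2 : t ^ a * t ≤ t ^ a * (s + 2 * r) := by
        have h3 : s ^ a * s ≤ t ^ a * s := mul_le_mul_of_nonneg_right hsa_le hs0.le
        have h4 : r * s ^ a ≤ r * t ^ a := mul_le_mul_of_nonneg_left hsa_le hr.le
        nlinarith
      exact le_of_mul_le_mul_left (by linarith [h2]) hta
  refine ⟨1 + 2 * r, by linarith, fun k l hk hl hne => ?_⟩
  have h1 := key k l hk hl hne
  have h2 := key l k hl hk (by rwa [Set.inter_comm] at hne)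
  have hC : (0:ℝ) < 1 + 2 * r := by linarith
  have hk1 : 0 ≤ ‖intVec k‖ := norm_nonneg _
  have hl1 : 0 ≤ ‖intVec l‖ := norm_nonneg _
  constructor
  · rw [inv_mul_le_iff₀ hC]
    nlinarith
  · nlinarith
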